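/- Diophantus's triangle problem has no real solution: there do not exist real numbers x and y such that x·y/2 = 7 and x² + y² = (12 − x − y)² (i.e., there is no right triangle with legs x, y, area 7 and perimeter 12). -/
import Mathlib

/-- Diophantus's triangle problem has no real solution: there is no right triangle with
legs `x`, `y`, area `7` and perimeter `12`. -/
theorem diophantus_triangle_no_real_solution :
    ¬ ∃ x y : ℝ, x * y / 2 = 7 ∧ x ^ 2 + y ^ 2 = (12 - x - y) ^ 2 := by
  rintro ⟨x, y, h1, h2⟩
  nlinarith [sq_nonneg (x - y), sq_nonneg (x + y)]
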